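/- arXiv:2112.12164 — 2 statements merged into one kernel-verified Lean document; each statement's English description precedes it below -/
import Mathlib

section
/- Let R be a commutative ring and I ⊆ R a nilpotent ideal. An element f of the Laurent series ring R((z)) is invertible if its image in (R/I)((z)) under the reduction map is invertible. -/
/-- The coefficientwise map on Hahn series induced by a ring hom, as a ring hom. -/
noncomputable def hahnSeriesMapRingHom {R S : Type*} [CommRing R] [CommRing S] (φ : R →+* S) :
    HahnSeries ℤ R →+* HahnSeries ℤ S where
  toFun x := x.map φ
  map_one' := HahnSeries.map_one φ.toMonoidWithZeroHom
  map_mul' x y := HahnSeries.map_mul φ.toNonUnitalRingHom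
  map_zero' := by ext; simp [HahnSeries.map_coeff]
  map_add' x y := HahnSeries.map_add φ.toAddMonoidHom

@[simp] lemma hahnSeriesMapRingHom_coeff {R S : Type*} [CommRing R] [CommRing S]
    (φ : R →+* S) (x : HahnSeries ℤ R) (n : ℤ) :
    (hahnSeriesMapRingHom φ x).coeff n = φ (x.coeff n) := rfl

/-- Powers of a Hahn series with coefficients in an ideal have coefficients in the
power of the ideal. -/
lemma hahnSeries_pow_coeff_mem {R : Type*} [CommRing R] (I : Ideal R)
    (x : HahnSeries ℤ R) (hx : ∀ n : ℤ, x.coeff n ∈ I) :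
    ∀ m : ℕ, ∀ n : ℤ, (x ^ (m + 1)).coeff n ∈ I ^ (m + 1) := by
  intro m
  induction m with
  | zero => simpa using hx
  | succ k ih =>
    intro n
    rw [show x ^ (k + 1 + 1) = x * x ^ (k + 1) from pow_succ' x (k + 1),
      HahnSeries.coeff_mul]
    refine Submodule.sum_mem _ fun ij _ => ?_
    rw [show I ^ (k + 1 + 1) = I * I ^ (k + 1) from pow_succ' I (k + 1)]
    exact Ideal.mul_mem_mul (hx ij.1) (ih ij.2)

/-- Let `R` be a commutative ring and `I ⊆ R` a nilpotent ideal.  An element `f` of the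
Laurent series ring `R((z))` is invertible if its image in `(R/I)((z))` under the
(coefficientwise) reduction map is invertible. -/
theorem laurentSeries_isUnit_of_isUnit_map_quotient
    (R : Type*) [CommRing R] (I : Ideal R) (hI : IsNilpotent I)
    (f : LaurentSeries R) (g : LaurentSeries (R ⧸ I))
    (hg : ∀ n : ℤ, g.coeff n = Ideal.Quotient.mk I (f.coeff n))
    (hu : IsUnit g) : IsUnit f := by
  classical
  obtain ⟨u, hug⟩ := hu
  set h : LaurentSeries (R ⧸ I) := (↑u⁻¹ : LaurentSeries (R ⧸ I)) with hh
  have hgh : g * h = 1 := by rw [hh, ← hug]; exact u.mul_inv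
  -- a section of the quotient map sending 0 to 0
  set s : R ⧸ I → R := fun x =>
    if x = 0 then 0 else Function.surjInv Ideal.Quotient.mk_surjective x with hsdef
  have hs : ∀ x, Ideal.Quotient.mk I (s x) = x := by
    intro x
    by_cases hx : x = 0
    · simp [hsdef, hx]
    · simp only [hsdef, if_neg hx]
      exact Function.surjInv_eq Ideal.Quotient.mk_surjective x
  have hs0 : s 0 = 0 := by simp [hsdef]
  -- lift h coefficientwise
  set H : LaurentSeries R :=
    ⟨fun n => s (h.coeff n), by
      refine (h.isPWO_support'.mono ?_)
      intro n hn
      simp only [Function.mem_support] at hn ⊢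
      intro h0
      exact hn (by rw [h0, hs0])⟩ with hHdef
  have hHcoeff : ∀ n, Ideal.Quotient.mk I (H.coeff n) = h.coeff n := fun n => hs _
  set Φ := hahnSeriesMapRingHom (Ideal.Quotient.mk I) with hΦ
  have hmapf : Φ f = g := by
    ext n; rw [hahnSeriesMapRingHom_coeff, hg n]
  have hmapH : Φ H = h := by
    ext n; rw [hahnSeriesMapRingHom_coeff]; exact hHcoeff n
  -- the error term
  set e : LaurentSeries R := f * H - 1 with he
  have hecoeff : ∀ n : ℤ, e.coeff n ∈ I := by
    intro n
    have hΦe : Φ e = 0 := by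
      rw [he, map_sub, map_mul, map_one, hmapf, hmapH, hgh, sub_self]
    have : Ideal.Quotient.mk I (e.coeff n) = 0 := by
      have := congrArg (fun x => HahnSeries.coeff x n) hΦe
      simpa [hΦ] using this
    exact Ideal.Quotient.eq_zero_iff_mem.mp this
  -- e is nilpotent
  obtain ⟨k, hk⟩ := hI
  have hek : e ^ (k + 1) = 0 := by
    ext n
    have hmem := hahnSeries_pow_coeff_mem I e hecoeff k n
    rw [pow_succ, hk, zero_mul] at hmem
    simpa using hmem
  have hnil : IsNilpotent e := ⟨k + 1, hek⟩
  have hunit : IsUnit (f * H) := by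
    have hfH : f * H = 1 + e := by rw [he]; ring
    rw [hfH]
    exact IsNilpotent.isUnit_one_add hnil
  exact isUnit_of_mul_isUnit_left hunit
end

section
/- With notation as above (𝔤 = 𝔰𝔩₂, g = diag(z^{1/2}, z^{-1/2})), there is a short exact sequence of ℂ-vector spaces 0 → z⁻¹𝔟 → 𝔤(K)/(g𝔤(O)g⁻¹ + 𝔤(O)) → 𝔤(K)/z⁻¹𝔤(O) → 0, where 𝔟 = ℂH ⊕ ℂE is the Borel subalgebra of upper-triangular trace-zero matrices. -/
open HahnSeries

/-- The `ℂ`-subspace `z^k·O` of `ℂ((z))`: Laurent series whose coefficients below `k`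
vanish. -/
noncomputable def ordGE (k : ℤ) : Submodule ℂ (LaurentSeries ℂ) where
  carrier := {x | ∀ n < k, x.coeff n = 0}
  add_mem' := by
    intro a b ha hb n hn
    rw [HahnSeries.coeff_add, ha n hn, hb n hn, add_zero]
  zero_mem' := by intro n hn; simp
  smul_mem' := by
    intro c x hx n hn
    rw [HahnSeries.coeff_smul, hx n hn, smul_zero]

/-- `𝔤(K)` for `𝔤 = 𝔰𝔩₂`, in coordinates `(e, h, f)` with respect to the basis
`E, H, F`. -/
abbrev gK := LaurentSeries ℂ × LaurentSeries ℂ × LaurentSeries ℂ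

/-- The lattice `g·𝔤(O)·g⁻¹ + 𝔤(O) = E·O ⊕ H·O ⊕ F·z⁻¹O`. -/
noncomputable def latN : Submodule ℂ gK := (ordGE 0).prod ((ordGE 0).prod (ordGE (-1)))

/-- The lattice `z⁻¹𝔤(O)`. -/
noncomputable def latP : Submodule ℂ gK := (ordGE (-1)).prod ((ordGE (-1)).prod (ordGE (-1)))

noncomputable def f0 : (ℂ × ℂ) →ₗ[ℂ] gK where
  toFun p := (p.2 • HahnSeries.single (-1 : ℤ) (1 : ℂ),
    p.1 • HahnSeries.single (-1 : ℤ) (1 : ℂ), 0)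
  map_add' p q := by simp only [Prod.ext_iff, Prod.fst_add, Prod.snd_add]; refine ⟨?_, ?_, (add_zero 0).symm⟩ <;> ext n <;> simp [HahnSeries.coeff_smul, add_mul]
  map_smul' c p := by simp only [Prod.ext_iff, Prod.smul_fst, Prod.smul_snd, RingHom.id_apply]; refine ⟨?_, ?_, (smul_zero _).symm⟩ <;> ext n <;> simp [HahnSeries.coeff_smul, mul_assoc]

lemma latN_le_latP : latN ≤ latP := by
  rintro ⟨x, y, w⟩ ⟨hx, hy, hw⟩
  exact ⟨fun n hn => hx n (by omega), fun n hn => hy n (by omega), hw⟩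

/-- There is a short exact sequence of `ℂ`-vector spaces
`0 → z⁻¹𝔟 → 𝔤(K)/(g𝔤(O)g⁻¹ + 𝔤(O)) → 𝔤(K)/z⁻¹𝔤(O) → 0`, where `𝔟 = ℂH ⊕ ℂE`:
the first map sends `(a, b) ∈ ℂ² ≅ z⁻¹𝔟` to the class of `a·z⁻¹H + b·z⁻¹E`, and the
second is the canonical projection. -/
theorem sl2_borel_short_exact_sequence :
    ∃ (fm : (ℂ × ℂ) →ₗ[ℂ] gK ⧸ latN) (gm : (gK ⧸ latN) →ₗ[ℂ] gK ⧸ latP),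
      (∀ a b : ℂ, fm (a, b) =
        Submodule.Quotient.mk
          (b • HahnSeries.single (-1 : ℤ) (1 : ℂ),
           a • HahnSeries.single (-1 : ℤ) (1 : ℂ), 0)) ∧
      (∀ v : gK, gm (Submodule.Quotient.mk v) = Submodule.Quotient.mk v) ∧
      Function.Injective fm ∧ Function.Surjective gm ∧
      LinearMap.range fm = LinearMap.ker gm := by
  refine ⟨latN.mkQ.comp f0,
    Submodule.mapQ latN latP LinearMap.id latN_le_latP, fun a b => rfl, fun v => rfl,
    ?_, ?_, ?_⟩
  · rw [injective_iff_map_eq_zero]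
    rintro ⟨a, b⟩ h
    have hmem : f0 (a, b) ∈ latN := by
      rwa [LinearMap.comp_apply, Submodule.mkQ_apply, Submodule.Quotient.mk_eq_zero] at h
    obtain ⟨h1, h2, -⟩ := hmem
    have hb := h1 (-1) (by norm_num)
    have ha := h2 (-1) (by norm_num)
    simp only [f0, LinearMap.coe_mk, AddHom.coe_mk, HahnSeries.coeff_smul,
      HahnSeries.coeff_single_same, smul_eq_mul, mul_one] at hb ha
    simp [ha, hb]
  · intro x
    obtain ⟨v, rfl⟩ := latP.mkQ_surjective x
    exact ⟨Submodule.Quotient.mk v, rfl⟩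
  · ext x
    constructor
    · rintro ⟨⟨a, b⟩, rfl⟩
      simp only [LinearMap.mem_ker, LinearMap.comp_apply, Submodule.mkQ_apply,
        Submodule.mapQ_apply, LinearMap.id_apply, Submodule.Quotient.mk_eq_zero]
      refine ⟨fun n hn => ?_, fun n hn => ?_, fun n hn => rfl⟩ <;>
        simp [f0, HahnSeries.coeff_single, show n ≠ -1 by omega]
    · intro hx
      obtain ⟨v, rfl⟩ := latN.mkQ_surjective x
      have hv : v ∈ latP := by
        rwa [LinearMap.mem_ker, Submodule.mkQ_apply, Submodule.mapQ_apply,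
          LinearMap.id_apply, Submodule.Quotient.mk_eq_zero] at hx
      obtain ⟨h1, h2, h3⟩ := hv
      refine ⟨(v.2.1.coeff (-1), v.1.coeff (-1)), ?_⟩
      simp only [LinearMap.comp_apply, Submodule.mkQ_apply]
      rw [Submodule.Quotient.eq]
      refine ⟨fun n hn => ?_, fun n hn => ?_, fun n hn => ?_⟩
      · simp only [f0, LinearMap.coe_mk, AddHom.coe_mk, Prod.fst_sub, HahnSeries.coeff_sub,
          HahnSeries.coeff_smul, HahnSeries.coeff_single, smul_eq_mul]
        rcases eq_or_ne n (-1) with rfl | hne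
        · simp
        · simp [hne, h1 n (by omega)]
      · simp only [f0, LinearMap.coe_mk, AddHom.coe_mk, Prod.snd_sub, Prod.fst_sub,
          HahnSeries.coeff_sub, HahnSeries.coeff_smul, HahnSeries.coeff_single, smul_eq_mul]
        rcases eq_or_ne n (-1) with rfl | hne
        · simp
        · simp [hne, h2 n (by omega)]
      · simpa [f0] using h3 n hn
end
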